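/- Proposition 7(3): Fix π₀ ∈ (0,1) and q ∈ (0, 1/2). For n ∈ ℕ and p ∈ (q, 1−q), let α(p) = (1 − √(1−4pq))/2 and V_n(p) = 1 / (1 + ((1−π₀)/π₀)·((p−α(p))/(q−α(p)))·(q/p)^{n+1}). Then for each n ∈ ℕ there exists p̂(n) ∈ [q, 1−q) such that p ↦ V_n(p) is increasing on (q, p̂(n)) and decreasing on (p̂(n), 1−q); moreover the thresholds p̂(n) can be chosen non-decreasing in n. -/

import Mathlib

/-- The sender's equilibrium value `V_n` as a function of `p`, for fixed
`q` and prior `π0`. -/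
noncomputable def Vp (π0 q : ℝ) (n : ℕ) (p : ℝ) : ℝ :=
  let α := (1 - Real.sqrt (1 - 4 * p * q)) / 2
  1 / (1 + ((1 - π0) / π0) * ((p - α) / (q - α)) * (q / p) ^ (n + 1))

/-!
Write `α(p)` for the smaller root of `α (1 - α) = p q`. On `[q, 1 - q]` the map `p ↦ α(p)` is an
increasing bijection onto `[α(q), q]` with inverse `a ↦ a (1 - a) / q`, and in terms of `a = α(p)`
one has `V_n = 1 / (1 + (1 - π₀)/π₀ · F_n(a))` for a positive likelihood ratio `F_n`. So `V_n`
increases in `p` exactly where `F_n` decreases in `a`. Logarithmic differentiation shows that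
`F_n' (a)` has the sign of `Φ(a) - n`, where `Φ` is a product of two positive increasing functions
that blows up at `q`. Hence `F_n` decreases below the point where `Φ` crosses `n` and increases
above it, and this crossing point moves right as `n` grows.
-/

open Set

theorem exists_monotone_threshold {f : ℝ → ℝ} {lo a₀ hi : ℝ} (hf : StrictMonoOn f (Ioo lo hi))
    (hlo : lo ≤ a₀) (hhi : a₀ < hi) (hbdd : ∀ c, ∃ b < hi, ∀ a ∈ Ioo lo hi, f a ≤ c → a ≤ b) :
    ∃ t : ℝ → ℝ, Monotone t ∧ ∀ c, t c ∈ Ico a₀ hi ∧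
      (∀ a ∈ Ioo a₀ (t c), f a < c) ∧ ∀ a ∈ Ioo (t c) hi, c < f a := by
  -- `a₀` is added so that the sublevel set, whose supremum is the threshold, is nonempty.
  set S : ℝ → Set ℝ := fun c => insert a₀ {a | a ∈ Ioo lo hi ∧ f a ≤ c}
  have hS_bdd : ∀ c, ∃ b < hi, ∀ a ∈ S c, a ≤ b := fun c => by
    obtain ⟨b, hb, hbound⟩ := hbdd c
    refine ⟨max a₀ b, max_lt hhi hb, ?_⟩
    rintro a (rfl | ⟨ha, hfa⟩)
    · exact le_max_left _ _
    · exact (hbound a ha hfa).trans (le_max_right _ _)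
  have hS_bddAbove : ∀ c, BddAbove (S c) := fun c =>
    let ⟨b, _, hb⟩ := hS_bdd c; ⟨b, hb⟩
  refine ⟨fun c => sSup (S c), fun c c' hcc' => ?_, fun c => ⟨⟨?_, ?_⟩, ?_, ?_⟩⟩
  · refine csSup_le_csSup (hS_bddAbove c') (insert_nonempty _ _) ?_
    rintro a (rfl | ⟨ha, hfa⟩)
    exacts [mem_insert _ _, mem_insert_of_mem _ ⟨ha, hfa.trans hcc'⟩]
  · exact le_csSup (hS_bddAbove c) (mem_insert _ _)
  · obtain ⟨b, hb, hbound⟩ := hS_bdd c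
    exact (csSup_le (insert_nonempty _ _) hbound).trans_lt hb
  · intro a ha
    obtain ⟨a', ha', haa'⟩ := exists_lt_of_lt_csSup (insert_nonempty _ _) ha.2
    rcases ha' with rfl | ⟨ha'mem, hfa'⟩
    · exact absurd ha.1 haa'.not_gt
    · exact (hf ⟨hlo.trans_lt ha.1, haa'.trans ha'mem.2⟩ ha'mem haa').trans_le hfa'
  · intro a ha
    by_contra! hfa
    have ha₀ : a₀ ≤ sSup (S c) := le_csSup (hS_bddAbove c) (mem_insert _ _)
    have hmem : a ∈ S c := mem_insert_of_mem _ ⟨⟨hlo.trans_lt (ha₀.trans_lt ha.1), ha.2⟩, hfa⟩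
    exact (le_csSup (hS_bddAbove c) hmem).not_gt ha.1

namespace LeftCensored

variable {q : ℝ}

noncomputable def alpha (q p : ℝ) : ℝ := (1 - √(1 - 4 * p * q)) / 2

noncomputable def invAlpha (q a : ℝ) : ℝ := a * (1 - a) / q

lemma four_mul_mul_le_one {p : ℝ} (hq : 0 < q) (hp : p ≤ 1 - q) : 4 * p * q ≤ 1 := by
  nlinarith [sq_nonneg (1 - 2 * q)]

lemma alpha_mul_one_sub_alpha {p : ℝ} (h : 4 * p * q ≤ 1) :
    alpha q p * (1 - alpha q p) = p * q := by
  have hs := Real.sq_sqrt (sub_nonneg.2 h)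
  unfold alpha
  linear_combination (-1 / 4 : ℝ) * hs

lemma invAlpha_alpha {p : ℝ} (hq : q ≠ 0) (h : 4 * p * q ≤ 1) : invAlpha q (alpha q p) = p := by
  rw [invAlpha, alpha_mul_one_sub_alpha h, mul_div_cancel_right₀ _ hq]

lemma alpha_invAlpha {a : ℝ} (hq : q ≠ 0) (ha : a ≤ 1 / 2) : alpha q (invAlpha q a) = a := by
  have h : 1 - 4 * invAlpha q a * q = (1 - 2 * a) ^ 2 := by
    unfold invAlpha; field_simp; ring
  rw [alpha, h, Real.sqrt_sq (by linarith)]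
  ring

lemma invAlpha_self (hq : q ≠ 0) : invAlpha q q = 1 - q :=
  mul_div_cancel_left₀ _ hq

lemma alpha_one_sub_self (hq : q ≠ 0) (hq' : q ≤ 1 / 2) : alpha q (1 - q) = q := by
  rw [← invAlpha_self hq, alpha_invAlpha hq hq']

lemma alpha_strictMonoOn (hq : 0 < q) : StrictMonoOn (alpha q) {p | 4 * p * q ≤ 1} := by
  intro p₁ _ p₂ hp₂ h
  have := Real.sqrt_lt_sqrt (sub_nonneg.2 hp₂) (by nlinarith : 1 - 4 * p₂ * q < 1 - 4 * p₁ * q)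
  unfold alpha
  linarith

lemma invAlpha_strictMonoOn (hq : 0 < q) : StrictMonoOn (invAlpha q) (Iic (1 / 2)) := by
  intro a _ b hb h
  unfold invAlpha
  apply div_lt_div_of_pos_right _ hq
  nlinarith [mem_Iic.1 hb]

lemma alpha_self_mem_Ioo (hq0 : 0 < q) (hq : q < 1 / 2) : alpha q q ∈ Ioo 0 q := by
  have hle : 4 * q * q ≤ 1 := four_mul_mul_le_one hq0 (by linarith)
  have hmul := alpha_mul_one_sub_alpha hle
  have hlt : alpha q q < alpha q (1 - q) :=
    alpha_strictMonoOn hq0 hle (four_mul_mul_le_one hq0 le_rfl) (by linarith)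
  rw [alpha_one_sub_self hq0.ne' hq.le] at hlt
  exact ⟨by nlinarith, hlt⟩

lemma hasDerivAt_invAlpha (a : ℝ) : HasDerivAt (invAlpha q) ((1 - 2 * a) / q) a :=
  (((hasDerivAt_id' a).mul ((hasDerivAt_id' a).const_sub 1)).div_const q).congr_deriv (by ring)

noncomputable def likelihoodRatio (q : ℝ) (n : ℕ) (a : ℝ) : ℝ :=
  (invAlpha q a - a) / (q - a) * (q / invAlpha q a) ^ (n + 1)

/-- The elasticity `d log F₀ / d log p` of the likelihood ratio at `p = invAlpha q a`. Since
`F_n = F₀ · (q / p) ^ n`, `F_n` decreases in `a` exactly where the elasticity is below `n`. -/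
noncomputable def elasticity (q a : ℝ) : ℝ :=
  a * (1 - a) / (1 - 2 * a) * ((1 - 2 * q) / ((q - a) * (1 - a - q)) + 1 / (1 - a))

lemma Vp_eq_likelihoodRatio {π0 p : ℝ} (n : ℕ) (hq : q ≠ 0) (hp : 4 * p * q ≤ 1) :
    Vp π0 q n p = 1 / (1 + (1 - π0) / π0 * likelihoodRatio q n (alpha q p)) := by
  rw [likelihoodRatio, invAlpha_alpha hq hp, ← mul_assoc]
  rfl

lemma likelihoodRatio_pos (hq : q < 1 / 2) (n : ℕ) {a : ℝ} (ha : a ∈ Ioo 0 q) :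
    0 < likelihoodRatio q n a := by
  obtain ⟨ha0, haq⟩ := ha
  have hq0 : 0 < q := ha0.trans haq
  have hp : invAlpha q a - a = a * (1 - a - q) / q := by
    unfold invAlpha; field_simp
  have h1aq : 0 < 1 - a - q := by linarith
  have h1a : 0 < 1 - a := by linarith
  have hqa : 0 < q - a := by linarith
  rw [likelihoodRatio, hp, invAlpha]
  positivity

lemma hasDerivAt_likelihoodRatio (hq : q < 1 / 2) (n : ℕ) {a : ℝ} (ha : a ∈ Ioo 0 q) :
    HasDerivAt (likelihoodRatio q n)
      (likelihoodRatio q n a * ((1 - 2 * a) / (a * (1 - a)) * (elasticity q a - n))) a := by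
  obtain ⟨ha0, haq⟩ := ha
  have hq0 : q ≠ 0 := by linarith
  have h1a : 1 - a ≠ 0 := by linarith
  have h2a : 1 - 2 * a ≠ 0 := by linarith
  have h1aq : 1 - a - q ≠ 0 := by linarith
  have hqa : q - a ≠ 0 := by linarith
  have hp : invAlpha q a ≠ 0 := div_ne_zero (mul_ne_zero ha0.ne' h1a) hq0
  have hP : HasDerivAt (invAlpha q) _ a := hasDerivAt_invAlpha a
  have h := ((hP.sub (hasDerivAt_id a)).div ((hasDerivAt_id a).const_sub q) hqa).mul
    (((hasDerivAt_const a q).div hP hp).pow (n + 1))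
  refine h.congr_deriv ?_
  simp only [likelihoodRatio, Pi.div_apply, Pi.sub_apply, Pi.pow_apply, id, Nat.add_sub_cancel,
    pow_succ]
  push_cast
  generalize (q / invAlpha q a) ^ n = K
  unfold elasticity invAlpha
  field_simp
  ring

lemma likelihoodRatio_strictAntiOn (hq : q < 1 / 2) (n : ℕ) {s : Set ℝ} (hs : Convex ℝ s)
    (hsq : s ⊆ Ioo 0 q) (h : ∀ a ∈ s, elasticity q a < n) :
    StrictAntiOn (likelihoodRatio q n) s := by
  refine strictAntiOn_of_deriv_neg hs
    (fun a ha => (hasDerivAt_likelihoodRatio hq n (hsq ha)).continuousAt.continuousWithinAt)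
    fun a ha => ?_
  have ha' := hsq (interior_subset ha)
  have hw : 0 < (1 - 2 * a) / (a * (1 - a)) := div_pos (by linarith [ha'.2])
    (mul_pos ha'.1 (by linarith [ha'.2]))
  rw [(hasDerivAt_likelihoodRatio hq n ha').deriv]
  exact mul_neg_of_pos_of_neg (likelihoodRatio_pos hq n ha')
    (mul_neg_of_pos_of_neg hw (sub_neg.2 (h a (interior_subset ha))))

lemma likelihoodRatio_strictMonoOn (hq : q < 1 / 2) (n : ℕ) {s : Set ℝ} (hs : Convex ℝ s)
    (hsq : s ⊆ Ioo 0 q) (h : ∀ a ∈ s, n < elasticity q a) :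
    StrictMonoOn (likelihoodRatio q n) s := by
  refine strictMonoOn_of_deriv_pos hs
    (fun a ha => (hasDerivAt_likelihoodRatio hq n (hsq ha)).continuousAt.continuousWithinAt)
    fun a ha => ?_
  have ha' := hsq (interior_subset ha)
  have hw : 0 < (1 - 2 * a) / (a * (1 - a)) := div_pos (by linarith [ha'.2])
    (mul_pos ha'.1 (by linarith [ha'.2]))
  rw [(hasDerivAt_likelihoodRatio hq n ha').deriv]
  exact mul_pos (likelihoodRatio_pos hq n ha') (mul_pos hw (sub_pos.2 (h a (interior_subset ha))))

lemma elasticity_strictMonoOn (hq : q < 1 / 2) : StrictMonoOn (elasticity q) (Ioo 0 q) := by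
  rintro a ⟨ha0, haq⟩ b ⟨hb0, hbq⟩ hab
  have hu : a * (1 - a) / (1 - 2 * a) < b * (1 - b) / (1 - 2 * b) := by
    rw [div_lt_div_iff₀ (by linarith) (by linarith)]
    nlinarith [mul_pos (sub_pos.2 hab) (add_pos (mul_pos (by linarith : (0:ℝ) < 1 - a)
      (by linarith : (0:ℝ) < 1 - b)) (mul_pos ha0 hb0))]
  have hv : (1 - 2 * q) / ((q - a) * (1 - a - q)) + 1 / (1 - a)
      < (1 - 2 * q) / ((q - b) * (1 - b - q)) + 1 / (1 - b) := by
    gcongr ?_ + ?_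
    · exact div_lt_div_of_pos_left (by linarith) (mul_pos (by linarith) (by linarith))
        (by nlinarith)
    · exact one_div_lt_one_div_of_lt (by linarith) (by linarith)
  exact mul_lt_mul'' hu hv (div_pos (mul_pos ha0 (by linarith)) (by linarith)).le
    (add_pos (div_pos (by linarith) (mul_pos (by linarith) (by linarith)))
      (one_div_pos.2 (by linarith))).le

lemma half_mul_div_le_elasticity {a : ℝ} (hq : q < 1 / 2) (ha : a ∈ Ioo 0 q) :
    a * (1 - 2 * q) / (2 * (q - a)) ≤ elasticity q a := by
  obtain ⟨ha0, haq⟩ := ha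
  have hqa : 0 < q - a := by linarith
  calc a * (1 - 2 * q) / (2 * (q - a)) = a / 2 * ((1 - 2 * q) / (q - a)) := by
        field_simp
    _ ≤ a * (1 - a) / (1 - 2 * a) * ((1 - 2 * q) / ((q - a) * (1 - a - q))) := by
        have h1aq : 0 < 1 - a - q := by linarith
        refine mul_le_mul ?_ ?_ (div_nonneg (by linarith) hqa.le)
          (div_nonneg (mul_nonneg ha0.le (by linarith)) (by linarith))
        · rw [div_le_div_iff₀ (by norm_num) (by linarith)]
          nlinarith
        · exact div_le_div_of_nonneg_left (by linarith) (by positivity)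
            (mul_le_of_le_one_right hqa.le (by linarith))
    _ ≤ elasticity q a := by
        unfold elasticity
        gcongr
        · exact div_nonneg (mul_nonneg ha0.le (by linarith)) (by linarith)
        · exact le_add_of_nonneg_right (one_div_nonneg.2 (by linarith))

lemma exists_bound_of_elasticity_le (hq0 : 0 < q) (hq : q < 1 / 2) (c : ℝ) :
    ∃ b < q, ∀ a ∈ Ioo 0 q, elasticity q a ≤ c → a ≤ b := by
  have hk : 0 < 1 - 2 * q + 2 * |c| := by linarith [abs_nonneg c]
  refine ⟨2 * |c| * q / (1 - 2 * q + 2 * |c|), ?_, fun a ha hc => ?_⟩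
  · rw [div_lt_iff₀ hk]
    nlinarith
  · have h := (half_mul_div_le_elasticity hq ha).trans (hc.trans (le_abs_self c))
    rw [div_le_iff₀ (by linarith [ha.2])] at h
    rw [le_div_iff₀ hk]
    linarith

lemma strictAntiOn_one_div_one_add_mul {C : ℝ} (hC : 0 < C) :
    StrictAntiOn (fun x => 1 / (1 + C * x)) (Ici 0) := fun x hx _ _ hxy =>
  one_div_lt_one_div_of_lt (by nlinarith [mem_Ici.1 hx]) (by nlinarith)

variable {π0 : ℝ} {n : ℕ}

lemma Vp_strictMonoOn_of_strictAntiOn (h0 : 0 < π0) (h1 : π0 < 1) (hq0 : 0 < q) (hq : q < 1 / 2)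
    {s t : Set ℝ} (hs : s ⊆ {p | 4 * p * q ≤ 1}) (hst : MapsTo (alpha q) s t) (ht : t ⊆ Ioo 0 q)
    (hF : StrictAntiOn (likelihoodRatio q n) t) : StrictMonoOn (Vp π0 q n) s :=
  ((strictAntiOn_one_div_one_add_mul (div_pos (by linarith) h0)).comp
      (hF.comp_strictMonoOn ((alpha_strictMonoOn hq0).mono hs) hst)
      fun _ hp => (likelihoodRatio_pos hq n (ht (hst hp))).le).congr
    fun _ hp => (Vp_eq_likelihoodRatio n hq0.ne' (hs hp)).symm

lemma Vp_strictAntiOn_of_strictMonoOn (h0 : 0 < π0) (h1 : π0 < 1) (hq0 : 0 < q) (hq : q < 1 / 2)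
    {s t : Set ℝ} (hs : s ⊆ {p | 4 * p * q ≤ 1}) (hst : MapsTo (alpha q) s t) (ht : t ⊆ Ioo 0 q)
    (hF : StrictMonoOn (likelihoodRatio q n) t) : StrictAntiOn (Vp π0 q n) s :=
  ((strictAntiOn_one_div_one_add_mul (div_pos (by linarith) h0)).comp_strictMonoOn
      (hF.comp ((alpha_strictMonoOn hq0).mono hs) hst)
      fun _ hp => (likelihoodRatio_pos hq n (ht (hst hp))).le).congr
    fun _ hp => (Vp_eq_likelihoodRatio n hq0.ne' (hs hp)).symm

lemma Vp_unimodal (h0 : 0 < π0) (h1 : π0 < 1) (hq0 : 0 < q) (hq : q < 1 / 2) {a : ℝ}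
    (ha : a ∈ Ico (alpha q q) q) (hanti : StrictAntiOn (likelihoodRatio q n) (Ioo (alpha q q) a))
    (hmono : StrictMonoOn (likelihoodRatio q n) (Ioo a q)) :
    invAlpha q a ∈ Ico q (1 - q) ∧ StrictMonoOn (Vp π0 q n) (Ioo q (invAlpha q a)) ∧
      StrictAntiOn (Vp π0 q n) (Ioo (invAlpha q a) (1 - q)) := by
  have hle : ∀ p ≤ 1 - q, 4 * p * q ≤ 1 := fun p hp => four_mul_mul_le_one hq0 hp
  have hα₀ := alpha_self_mem_Ioo hq0 hq
  have ha_half : a ∈ Iic (1 / 2) := mem_Iic.2 (by linarith [ha.2])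
  have hpa : q ≤ invAlpha q a := by
    calc q = invAlpha q (alpha q q) := (invAlpha_alpha hq0.ne' (hle q (by linarith))).symm
      _ ≤ invAlpha q a := (invAlpha_strictMonoOn hq0).monotoneOn
          (mem_Iic.2 (by linarith [hα₀.2])) ha_half ha.1
  have hpa' : invAlpha q a < 1 - q := by
    calc invAlpha q a < invAlpha q q := invAlpha_strictMonoOn hq0 ha_half (mem_Iic.2 hq.le) ha.2
      _ = 1 - q := invAlpha_self hq0.ne'
  have hmap : ∀ {x y}, q ≤ x → y ≤ 1 - q →
      MapsTo (alpha q) (Ioo x y) (Ioo (alpha q x) (alpha q y)) := fun _ hy =>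
    ((alpha_strictMonoOn hq0).mono fun p hp => hle p (hp.2.trans hy)).mapsTo_Ioo
  have hα_a : alpha q (invAlpha q a) = a := alpha_invAlpha hq0.ne' ha_half
  refine ⟨⟨hpa, hpa'⟩, ?_, ?_⟩
  · have hst := hmap le_rfl hpa'.le
    rw [hα_a] at hst
    exact Vp_strictMonoOn_of_strictAntiOn h0 h1 hq0 hq (fun p hp => hle p (by linarith [hp.2]))
      hst (fun x hx => ⟨hα₀.1.trans hx.1, hx.2.trans ha.2⟩) hanti
  · have hst := hmap hpa le_rfl
    rw [hα_a, alpha_one_sub_self hq0.ne' hq.le] at hst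
    exact Vp_strictAntiOn_of_strictMonoOn h0 h1 hq0 hq (fun p hp => hle p hp.2.le)
      hst (fun x hx => ⟨(hα₀.1.trans_le ha.1).trans hx.1, hx.2⟩) hmono

end LeftCensored

open LeftCensored

/-- Proposition 7(3): for fixed `π0 ∈ (0,1)` and `q ∈ (0, 1/2)`, for each `n`
there is a threshold `p̂(n) ∈ [q, 1−q)` such that `V_n` is increasing in `p`
on `(q, p̂(n))` and decreasing on `(p̂(n), 1−q)`; the thresholds can be chosen
non-decreasing in `n`. -/
theorem stmt_19 (π0 q : ℝ) (h0 : 0 < π0) (h1 : π0 < 1) (hq0 : 0 < q) (hq : q < 1 / 2) :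
    ∃ phat : ℕ → ℝ,
      (∀ n : ℕ, phat n ∈ Set.Ico q (1 - q) ∧
        StrictMonoOn (Vp π0 q n) (Set.Ioo q (phat n)) ∧
        StrictAntiOn (Vp π0 q n) (Set.Ioo (phat n) (1 - q))) ∧
      Monotone phat := by
  have hα₀ := alpha_self_mem_Ioo hq0 hq
  obtain ⟨t, ht_mono, ht⟩ := exists_monotone_threshold (elasticity_strictMonoOn hq) hα₀.1.le
    hα₀.2 (exists_bound_of_elasticity_le hq0 hq)
  refine ⟨fun n => invAlpha q (t n), fun n => ?_, fun m n hmn => ?_⟩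
  · obtain ⟨hta, hleft, hright⟩ := ht n
    exact Vp_unimodal h0 h1 hq0 hq hta
      (likelihoodRatio_strictAntiOn hq n (convex_Ioo _ _)
        (fun x hx => ⟨hα₀.1.trans hx.1, hx.2.trans hta.2⟩) hleft)
      (likelihoodRatio_strictMonoOn hq n (convex_Ioo _ _)
        (fun x hx => ⟨(hα₀.1.trans_le hta.1).trans hx.1, hx.2⟩) hright)
  · exact (invAlpha_strictMonoOn hq0).monotoneOn (mem_Iic.2 (by linarith [(ht m).1.2]))
      (mem_Iic.2 (by linarith [(ht n).1.2])) (ht_mono (Nat.cast_le.2 hmn))
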